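/- arXiv:math/0110277 — 3 statements merged into one kernel-verified Lean document; each statement's English description precedes it below -/
import Mathlib

section
/- The number of facets of the cyclic d-polytope with k vertices equals C(k - ⌈d/2⌉, ⌊d/2⌋) + C(k - 1 - ⌈(d-1)/2⌉, ⌊(d-1)/2⌋). -/
/-- Gale's evenness condition: a `d`-subset `S` of the `k` vertices of the cyclic
`d`-polytope (indexed along the moment curve) spans a facet iff any two vertices
not in `S` are separated by an even number of elements of `S`. -/
def IsGaleFacet (k d : ℕ) (S : Finset (Fin k)) : Prop :=
  S.card = d ∧ ∀ i ∉ S, ∀ j ∉ S, Even ((S.filter (fun s => i < s ∧ s < j)).card)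

instance (k d : ℕ) : DecidablePred (IsGaleFacet k d) := fun _ =>
  inferInstanceAs (Decidable (_ ∧ _))


def GP (pi d n : ℕ) (S : Finset ℕ) : Prop :=
  S.card = d ∧ ∀ i < n, i ∉ S → (S.filter (· < i)).card % 2 = pi

instance (pi d n : ℕ) : DecidablePred (GP pi d n) := fun _ =>
  inferInstanceAs (Decidable (_ ∧ _))

def Pc (pi d n : ℕ) : ℕ := (((Finset.range n).powerset).filter (GP pi d n)).card

lemma Pc_succ (pi d n : ℕ) (hd : 1 ≤ d) :
    Pc pi d (n + 1) = Pc pi (d - 1) n + (if pi = d % 2 then Pc pi d n else 0) := by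
  classical
  set A := ((Finset.range (n+1)).powerset).filter (GP pi d (n+1)) with hA
  have hsplit : A.card = (A.filter (fun S => n ∈ S)).card + (A.filter (fun S => n ∉ S)).card := by
    rw [Finset.card_filter_add_card_filter_not]
  have h1 : (A.filter (fun S => n ∈ S)).card = Pc pi (d-1) n := by
    refine Finset.card_bij' (fun S _ => S.erase n)
      (fun T _ => insert n T) ?hi ?hj ?li ?ri
    case hi =>
      rintro S hS
      simp only [hA, Finset.mem_filter, Finset.mem_powerset, GP] at hS
      obtain ⟨⟨hsub, hcard, hcond⟩, hn⟩ := hS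
      simp only [Finset.mem_filter, Finset.mem_powerset, GP]
      refine ⟨?_, ?_, ?_⟩
      · intro x hx
        simp only [Finset.mem_erase] at hx
        have := hsub hx.2
        simp only [Finset.mem_range] at this ⊢
        omega
      · rw [Finset.card_erase_of_mem hn, hcard]
      · intro i hi hiS
        have hiS' : i ∉ S := by
          intro h
          exact hiS (Finset.mem_erase.mpr ⟨by omega, h⟩)
        have := hcond i (by omega) hiS'
        rw [← this]
        congr 1
        rw [Finset.filter_erase, Finset.erase_eq_of_notMem]
        simp only [Finset.mem_filter]
        rintro ⟨-, h⟩
        omega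
    case hj =>
      rintro T hT
      simp only [Finset.mem_filter, Finset.mem_powerset, GP] at hT
      obtain ⟨hsub, hcard, hcond⟩ := hT
      have hnT : n ∉ T := fun h => by simpa using hsub h
      simp only [hA, Finset.mem_filter, Finset.mem_powerset, GP]
      refine ⟨⟨?_, ?_, ?_⟩, by simp⟩
      · intro x hx
        rcases Finset.mem_insert.mp hx with rfl | hx
        · simp
        · have := hsub hx
          simp only [Finset.mem_range] at this ⊢
          omega
      · rw [Finset.card_insert_of_notMem hnT, hcard]
        omega
      · intro i hi hiS
        have hin : i ≠ n := fun h => hiS (h ▸ Finset.mem_insert_self n T)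
        have hiT : i ∉ T := fun h => hiS (Finset.mem_insert_of_mem h)
        have := hcond i (by omega) hiT
        rw [← this]
        congr 1
        rw [Finset.filter_insert]
        rw [if_neg (by omega)]
    case li =>
      intro S hS
      simp only [hA, Finset.mem_filter] at hS
      exact Finset.insert_erase hS.2
    case ri =>
      intro T hT
      simp only [Finset.mem_filter, Finset.mem_powerset] at hT
      have hnT : n ∉ T := fun h => by simpa using hT.1 h
      exact Finset.erase_insert hnT
  have h2 : (A.filter (fun S => n ∉ S)).card = if pi = d % 2 then Pc pi d n else 0 := by
    have key : ∀ S, S ∈ A.filter (fun S => n ∉ S) ↔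
        (pi = d % 2 ∧ S ∈ ((Finset.range n).powerset).filter (GP pi d n)) := by
      intro S
      simp only [hA, Finset.mem_filter, Finset.mem_powerset, GP]
      constructor
      · rintro ⟨⟨hsub, hcard, hcond⟩, hn⟩
        have hsub' : S ⊆ Finset.range n := by
          intro x hx
          have := hsub hx
          simp only [Finset.mem_range] at this ⊢
          have : x ≠ n := fun h => hn (h ▸ hx)
          omega
        have hpi : pi = d % 2 := by
          have := hcond n (by omega) hn
          have hf : S.filter (· < n) = S := by
            apply Finset.filter_true_of_mem
            intro x hx
            simpa using hsub' hx
          rw [hf, hcard] at this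
          omega
        exact ⟨hpi, hsub', hcard, fun i hi => hcond i (by omega)⟩
      · rintro ⟨hpi, hsub, hcard, hcond⟩
        have hn : n ∉ S := fun h => by simpa using hsub h
        refine ⟨⟨fun x hx => by
          have := hsub hx; simp only [Finset.mem_range] at this ⊢; omega, hcard, ?_⟩, hn⟩
        intro i hi hiS
        rcases Nat.lt_or_ge i n with h | h
        · exact hcond i h hiS
        · have hin : i = n := by omega
          subst hin
          have hf : S.filter (· < i) = S := by
            apply Finset.filter_true_of_mem
            intro x hx
            simpa using hsub hx
          rw [hf, hcard]
          omega
    split_ifs with hc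
    · rw [Pc]
      congr 1
      ext S
      rw [key]
      simp [hc]
    · rw [Finset.card_eq_zero]
      ext S
      rw [key]
      simp only [Finset.notMem_empty, iff_false]
      rintro ⟨hpi, -⟩
      exact hc hpi
  rw [Pc, ← hA, hsplit, h1, h2]

lemma Pc_zero (pi n : ℕ) : Pc pi 0 n = if pi = 0 ∨ n = 0 then 1 else 0 := by
  unfold Pc
  have h : ((Finset.range n).powerset).filter (GP pi 0 n)
      = if pi = 0 ∨ n = 0 then {∅} else ∅ := by
    ext S
    simp only [Finset.mem_filter, Finset.mem_powerset, GP, Finset.card_eq_zero]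
    constructor
    · rintro ⟨hsub, rfl, hcond⟩
      rcases Nat.eq_zero_or_pos n with hn | hn
      · simp [hn]
      · have := hcond 0 hn (by simp)
        simp at this
        simp [this.symm]
    · intro hS
      split_ifs at hS with hc
      · simp only [Finset.mem_singleton] at hS
        subst hS
        refine ⟨by simp, rfl, ?_⟩
        intro i hi _
        simp
        rcases hc with h | h
        · omega
        · omega
      · simp at hS
  rw [h]
  split_ifs <;> simp

lemma Pc_of_lt {d n : ℕ} (h : n < d) (pi : ℕ) : Pc pi d n = 0 := by
  unfold Pc
  rw [Finset.card_eq_zero]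
  ext S
  simp only [Finset.mem_filter, Finset.mem_powerset, GP, Finset.notMem_empty, iff_false]
  rintro ⟨hsub, hcard, -⟩
  have := Finset.card_le_card hsub
  simp [hcard] at this
  omega

lemma pascal' (a b : ℕ) (hb : 1 ≤ b) :
    Nat.choose a (b - 1) + Nat.choose a b = Nat.choose (a + 1) b := by
  obtain ⟨c, rfl⟩ : ∃ c, b = c + 1 := ⟨b - 1, by omega⟩
  simp [Nat.choose_succ_succ']

lemma C0 : ∀ n d, d ≤ n → Pc 0 d n = Nat.choose (n - (d + 1) / 2) (d / 2) := by
  intro n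
  induction n with
  | zero =>
    intro d hd
    interval_cases d
    simp [Pc_zero]
  | succ n ih =>
    have ih' : ∀ d, 2 ≤ d → d ≤ n + 1 → Pc 0 d n = Nat.choose (n - (d + 1) / 2) (d / 2) := by
      intro d h2 hd
      rcases Nat.lt_or_ge n d with h | h
      · rw [Pc_of_lt h]
        symm
        apply Nat.choose_eq_zero_of_lt
        omega
      · exact ih d h
    intro d hd
    rcases Nat.eq_zero_or_pos d with rfl | hd1
    · simp [Pc_zero]
    rw [Pc_succ _ _ _ hd1]
    rcases Nat.even_or_odd d with he | ho
    · have hd2 : d % 2 = 0 := Nat.even_iff.mp he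
      have h2 : 2 ≤ d := by omega
      rw [if_pos (by omega)]
      rw [ih (d - 1) (by omega), ih' d h2 hd]
      have e1 : (d - 1 + 1) / 2 = (d + 1) / 2 := by omega
      have e2 : (d - 1) / 2 = d / 2 - 1 := by omega
      have e3 : n + 1 - (d + 1) / 2 = (n - (d + 1) / 2) + 1 := by omega
      rw [e1, e2, e3]
      exact pascal' _ _ (by omega)
    · have hd2 : d % 2 = 1 := Nat.odd_iff.mp ho
      rw [if_neg (by omega), add_zero]
      rw [ih (d - 1) (by omega)]
      congr 1 <;> omega

lemma C1 : ∀ n d, 1 ≤ d → d ≤ n → Pc 1 d n = Nat.choose (n - 1 - d / 2) ((d - 1) / 2) := by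
  intro n
  induction n with
  | zero => intro d h1 h0; omega
  | succ n ih =>
    have ih' : ∀ d, 3 ≤ d → d % 2 = 1 → d ≤ n + 1 →
        Pc 1 d n = Nat.choose (n - 1 - d / 2) ((d - 1) / 2) := by
      intro d h3 hodd hd
      rcases Nat.lt_or_ge n d with h | h
      · rw [Pc_of_lt h]
        symm
        apply Nat.choose_eq_zero_of_lt
        omega
      · exact ih d (by omega) h
    intro d hd1 hd
    rcases eq_or_lt_of_le hd1 with h1 | h1
    · -- d = 1
      rw [← h1, Pc_succ _ _ _ (by omega)]
      simp only [Nat.sub_self]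
      rw [Pc_zero]
      rcases Nat.eq_zero_or_pos n with rfl | hn
      · rw [Pc_of_lt (by omega)]
        simp
      · rw [if_neg (by omega), ih 1 le_rfl hn]
        simp
    · rw [Pc_succ _ _ _ hd1]
      rcases Nat.even_or_odd d with he | ho
      · have hd2 : d % 2 = 0 := Nat.even_iff.mp he
        rw [if_neg (by omega), add_zero]
        rw [ih (d - 1) (by omega) (by omega)]
        congr 1 <;> omega
      · have hd2 : d % 2 = 1 := Nat.odd_iff.mp ho
        have h3 : 3 ≤ d := by omega
        rw [if_pos (by omega)]
        rw [ih (d - 1) (by omega) (by omega), ih' d h3 hd2 hd]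
        have e1 : (d - 1) / 2 = d / 2 := by omega
        have e2 : (d - 1 - 1) / 2 = d / 2 - 1 := by omega
        have e4 : n + 1 - 1 - d / 2 = (n - 1 - d / 2) + 1 := by omega
        rw [e1, e2, e4]
        exact pascal' _ _ (by omega)

lemma between_card {k : ℕ} (S : Finset (Fin k)) {i j : Fin k} (hi : i ∉ S) (hij : i < j) :
    (S.filter (fun s => i < s ∧ s < j)).card + (S.filter (· < i)).card
      = (S.filter (· < j)).card := by
  classical
  rw [← Finset.card_union_of_disjoint]
  · congr 1
    ext s
    simp only [Finset.mem_union, Finset.mem_filter]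
    constructor
    · rintro (⟨hs, h1, h2⟩ | ⟨hs, h1⟩)
      · exact ⟨hs, h2⟩
      · exact ⟨hs, lt_trans h1 hij⟩
    · rintro ⟨hs, hsj⟩
      rcases lt_trichotomy s i with h | h | h
      · exact Or.inr ⟨hs, h⟩
      · exact absurd (h ▸ hs) hi
      · exact Or.inl ⟨hs, h, hsj⟩
  · rw [Finset.disjoint_left]
    rintro s hs1 hs2
    simp only [Finset.mem_filter] at hs1 hs2
    exact absurd (lt_trans hs1.2.1 hs2.2) (lt_irrefl i)

lemma gale_iff {k d : ℕ} (hd : d < k) (S : Finset (Fin k)) :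
    IsGaleFacet k d S ↔
      (S.card = d ∧ ∀ i ∉ S, (S.filter (· < i)).card % 2 = 0) ∨
      (S.card = d ∧ ∀ i ∉ S, (S.filter (· < i)).card % 2 = 1) := by
  constructor
  · rintro ⟨hcard, hcond⟩
    have hex : ∃ i0 : Fin k, i0 ∉ S := by
      by_contra h
      push_neg at h
      have : S = Finset.univ := Finset.eq_univ_iff_forall.mpr h
      rw [this, Finset.card_univ, Fintype.card_fin] at hcard
      omega
    obtain ⟨i0, hi0⟩ := hex
    have key : ∀ i ∉ S, (S.filter (· < i)).card % 2 = (S.filter (· < i0)).card % 2 := by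
      intro i hi
      rcases lt_trichotomy i i0 with h | h | h
      · have hb := between_card S hi h
        have he := hcond i hi i0 hi0
        rw [Nat.even_iff] at he
        omega
      · rw [h]
      · have hb := between_card S hi0 h
        have he := hcond i0 hi0 i hi
        rw [Nat.even_iff] at he
        omega
    rcases Nat.mod_two_eq_zero_or_one ((S.filter (· < i0)).card) with h | h
    · exact Or.inl ⟨hcard, fun i hi => by rw [key i hi, h]⟩
    · exact Or.inr ⟨hcard, fun i hi => by rw [key i hi, h]⟩
  · have main : ∀ pi, (∀ i ∉ S, (S.filter (· < i)).card % 2 = pi) →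
        ∀ i ∉ S, ∀ j ∉ S, Even ((S.filter (fun s => i < s ∧ s < j)).card) := by
      intro pi hcond i hi j hj
      rcases lt_or_ge i j with hij | hij
      · have hb := between_card S hi hij
        have h1 := hcond i hi
        have h2 := hcond j hj
        rw [Nat.even_iff]
        omega
      · have : S.filter (fun s => i < s ∧ s < j) = ∅ := by
          apply Finset.filter_false_of_mem
          rintro s hs ⟨h1, h2⟩
          exact absurd (lt_trans h1 h2) (not_lt.mpr hij)
        rw [this]
        simp
    rintro (⟨hcard, hcond⟩ | ⟨hcard, hcond⟩)
    · exact ⟨hcard, main 0 hcond⟩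
    · exact ⟨hcard, main 1 hcond⟩

lemma transfer (pi d k : ℕ) :
    (Finset.univ.filter (fun S : Finset (Fin k) =>
        S.card = d ∧ ∀ i ∉ S, (S.filter (· < i)).card % 2 = pi)).card = Pc pi d k := by
  classical
  have hmapmem : ∀ (S : Finset (Fin k)) (m : ℕ),
      m ∈ S.map Fin.valEmbedding ↔ ∃ a ∈ S, (a : ℕ) = m := by
    intro S m
    simp [Finset.mem_map]
  have hATF : ∀ (T : Finset ℕ) (h : ∀ m ∈ T, m < k),
      (T.attachFin h).map Fin.valEmbedding = T := by
    intro T h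
    ext m
    rw [hmapmem]
    constructor
    · rintro ⟨a, ha, rfl⟩
      exact (Finset.mem_attachFin _).mp ha
    · intro hm
      exact ⟨⟨m, h m hm⟩, (Finset.mem_attachFin _).mpr hm, rfl⟩
  have hfilt : ∀ (S : Finset (Fin k)) (i : Fin k),
      ((S.map Fin.valEmbedding).filter (· < (i : ℕ))).card = (S.filter (· < i)).card := by
    intro S i
    rw [Finset.filter_map, Finset.card_map]
    congr 1
  refine Finset.card_bij' (fun S _ => S.map Fin.valEmbedding)
    (fun T hT => T.attachFin (fun m hm => by
      simp only [Pc, Finset.mem_filter, Finset.mem_powerset] at hT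
      simpa using hT.1 hm)) ?hi ?hj ?li ?ri
  case hi =>
    rintro S hS
    simp only [Finset.mem_filter, Finset.mem_univ, true_and] at hS
    obtain ⟨hcard, hcond⟩ := hS
    simp only [Pc, Finset.mem_filter, Finset.mem_powerset, GP]
    refine ⟨?_, ?_, ?_⟩
    · intro m hm
      rw [hmapmem] at hm
      obtain ⟨a, -, rfl⟩ := hm
      simp [a.isLt]
    · rw [Finset.card_map, hcard]
    · intro i hik hiS
      have hi' : (⟨i, hik⟩ : Fin k) ∉ S := by
        intro h
        exact hiS ((hmapmem S i).mpr ⟨⟨i, hik⟩, h, rfl⟩)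
      have := hcond ⟨i, hik⟩ hi'
      rw [← this, ← hfilt S ⟨i, hik⟩]
  case hj =>
    rintro T hT
    simp only [Pc, Finset.mem_filter, Finset.mem_powerset, GP] at hT
    obtain ⟨hsub, hcard, hcond⟩ := hT
    simp only [Finset.mem_filter, Finset.mem_univ, true_and]
    constructor
    · rw [Finset.card_attachFin, hcard]
    · intro i hiA
      have hiT : (i : ℕ) ∉ T := by
        intro h
        exact hiA ((Finset.mem_attachFin _).mpr h)
      rw [← hfilt (T.attachFin _) i, hATF]
      exact hcond i i.isLt hiT
  case li =>
    intro S hS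
    ext a
    rw [Finset.mem_attachFin]
    rw [hmapmem]
    constructor
    · rintro ⟨b, hb, hba⟩
      have : b = a := Fin.ext hba
      exact this ▸ hb
    · intro ha
      exact ⟨a, ha, rfl⟩
  case ri =>
    intro T hT
    exact hATF T _

/-- The number of facets of the cyclic `d`-polytope with `k` vertices equals
`C(k - ⌈d/2⌉, ⌊d/2⌋) + C(k - 1 - ⌈(d-1)/2⌉, ⌊(d-1)/2⌋)`. -/
theorem cyclic_polytope_facet_count (d k : ℕ) (hd : 1 ≤ d) (hk : d + 1 ≤ k) :
    (Finset.univ.filter (IsGaleFacet k d)).card =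
      Nat.choose (k - (d + 1) / 2) (d / 2) +
        Nat.choose (k - 1 - d / 2) ((d - 1) / 2) := by
  classical
  have hdk : d < k := hk
  have hsplit : (Finset.univ.filter (IsGaleFacet k d)) =
      (Finset.univ.filter (fun S : Finset (Fin k) =>
        S.card = d ∧ ∀ i ∉ S, (S.filter (· < i)).card % 2 = 0)) ∪
      (Finset.univ.filter (fun S : Finset (Fin k) =>
        S.card = d ∧ ∀ i ∉ S, (S.filter (· < i)).card % 2 = 1)) := by
    rw [← Finset.filter_or]
    apply Finset.filter_congr
    intro S _
    exact gale_iff hdk S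
  have hdis : Disjoint
      (Finset.univ.filter (fun S : Finset (Fin k) =>
        S.card = d ∧ ∀ i ∉ S, (S.filter (· < i)).card % 2 = 0))
      (Finset.univ.filter (fun S : Finset (Fin k) =>
        S.card = d ∧ ∀ i ∉ S, (S.filter (· < i)).card % 2 = 1)) := by
    rw [Finset.disjoint_left]
    intro S h0 h1
    simp only [Finset.mem_filter, Finset.mem_univ, true_and] at h0 h1
    have hex : ∃ i0 : Fin k, i0 ∉ S := by
      by_contra h
      push_neg at h
      have : S = Finset.univ := Finset.eq_univ_iff_forall.mpr h
      rw [this, Finset.card_univ, Fintype.card_fin] at h0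
      omega
    obtain ⟨i0, hi0⟩ := hex
    have := h0.2 i0 hi0
    have := h1.2 i0 hi0
    omega
  rw [hsplit, Finset.card_union_of_disjoint hdis, transfer, transfer,
    C0 k d (le_of_lt hdk), C1 k d hd (le_of_lt hdk)]
end

section
/- The lattice simplex conv{e_1, e_2, e_3, (-3,-7,-9,20)} ⊂ ℝ^4 contains exactly 8 lattice points of ℤ^4: its 4 vertices and 4 points in its relative interior. -/
open Finset

/-- The vertices `e₁, e₂, e₃, (-3,-7,-9,20)` as integral vectors in `ℤ⁴`. -/
def vtx : Fin 4 → (Fin 4 → ℤ) :=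
  ![![1, 0, 0, 0], ![0, 1, 0, 0], ![0, 0, 1, 0], ![-3, -7, -9, 20]]

/-- The same vertices as points of `ℝ⁴`. -/
noncomputable def vtxR : Fin 4 → (Fin 4 → ℝ) := fun k i => (vtx k i : ℝ)

lemma mem_hull_iff (x : Fin 4 → ℝ) :
    x ∈ convexHull ℝ (Set.range vtxR) ↔
      ∃ w : Fin 4 → ℝ, (∀ i, 0 ≤ w i) ∧ ∑ i, w i = 1 ∧ ∑ i, w i • vtxR i = x := by
  constructor
  · intro hx
    rw [convexHull_range_eq_exists_affineCombination] at hx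
    obtain ⟨s, w, hw0, hw1, hx⟩ := hx
    refine ⟨Set.indicator (s : Set (Fin 4)) w, ?_, ?_, ?_⟩
    · intro i
      by_cases hi : i ∈ s <;> simp [Set.indicator, hi]
      exact hw0 i hi
    · rw [Finset.sum_indicator_subset w s.subset_univ]; exact hw1
    · have h1 : ∑ i, Set.indicator (s : Set (Fin 4)) w i = 1 := by
        rw [Finset.sum_indicator_subset w s.subset_univ]; exact hw1
      rw [Finset.affineCombination_indicator_subset w vtxR s.subset_univ,
        affineCombination_eq_linear_combination _ _ _ h1] at hx
      exact hx
  · rintro ⟨w, hw0, hw1, hx⟩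
    exact mem_convexHull_of_exists_fintype w vtxR hw0 hw1 (fun i => Set.mem_range_self i) hx

lemma mem_iff (p : Fin 4 → ℤ) :
    (fun i => (p i : ℝ)) ∈ convexHull ℝ (Set.range vtxR) ↔
      (p 0 + p 1 + p 2 + p 3 = 1 ∧ 0 ≤ p 3 ∧ 0 ≤ 20 * p 0 + 3 * p 3 ∧
        0 ≤ 20 * p 1 + 7 * p 3 ∧ 0 ≤ 20 * p 2 + 9 * p 3) := by
  rw [mem_hull_iff]
  constructor
  · rintro ⟨w, hw0, hw1, hx⟩
    have h := fun j => congrFun hx j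
    simp only [Finset.sum_apply, Pi.smul_apply, smul_eq_mul, vtxR, vtx,
      Fin.sum_univ_four, Fin.isValue, Matrix.cons_val_zero, Matrix.cons_val_one,
      Matrix.head_cons, Matrix.cons_val_two, Matrix.tail_cons, Matrix.cons_val_three,
      Matrix.cons_val_fin_one, Int.cast_one, Int.cast_zero, Int.cast_neg,
      Int.cast_ofNat] at h
    have h0 := h 0; have h1 := h 1; have h2 := h 2; have h3 := h 3
    simp only [Matrix.cons_val] at h0 h1 h2 h3; norm_num at h0 h1 h2 h3
    have hs := hw1
    rw [Fin.sum_univ_four] at hs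
    have hw0' := hw0 0; have hw1' := hw0 1; have hw2' := hw0 2; have hw3' := hw0 3
    refine ⟨?_, ?_, ?_, ?_, ?_⟩
    · have : ((p 0 + p 1 + p 2 + p 3 : ℤ) : ℝ) = 1 := by push_cast; linarith
      exact_mod_cast this
    · have : (0 : ℝ) ≤ ((p 3 : ℤ) : ℝ) := by linarith
      exact_mod_cast this
    · have : (0 : ℝ) ≤ ((20 * p 0 + 3 * p 3 : ℤ) : ℝ) := by push_cast; linarith
      exact_mod_cast this
    · have : (0 : ℝ) ≤ ((20 * p 1 + 7 * p 3 : ℤ) : ℝ) := by push_cast; linarith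
      exact_mod_cast this
    · have : (0 : ℝ) ≤ ((20 * p 2 + 9 * p 3 : ℤ) : ℝ) := by push_cast; linarith
      exact_mod_cast this
  · rintro ⟨h1, h2, h3, h4, h5⟩
    refine ⟨![(20 * (p 0 : ℝ) + 3 * p 3) / 20, (20 * (p 1 : ℝ) + 7 * p 3) / 20,
      (20 * (p 2 : ℝ) + 9 * p 3) / 20, (p 3 : ℝ) / 20], ?_, ?_, ?_⟩
    · intro i
      have c2 : (0 : ℝ) ≤ (p 3 : ℝ) := by exact_mod_cast h2
      have c3 : (0 : ℝ) ≤ 20 * (p 0 : ℝ) + 3 * p 3 := by exact_mod_cast h3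
      have c4 : (0 : ℝ) ≤ 20 * (p 1 : ℝ) + 7 * p 3 := by exact_mod_cast h4
      have c5 : (0 : ℝ) ≤ 20 * (p 2 : ℝ) + 9 * p 3 := by exact_mod_cast h5
      fin_cases i <;> simp <;> linarith
    · have c1 : ((p 0 : ℝ) + p 1 + p 2 + p 3) = 1 := by exact_mod_cast h1
      rw [Fin.sum_univ_four]
      simp only [Matrix.cons_val_zero, Matrix.cons_val_one, Matrix.head_cons,
        Matrix.cons_val_two, Matrix.tail_cons, Matrix.cons_val_three]
      linarith
    · funext j
      rw [Finset.sum_apply]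
      simp only [Pi.smul_apply, smul_eq_mul, vtxR, vtx, Fin.sum_univ_four]
      have e2 : (⟨2, by omega⟩ : Fin 4) = 2 := rfl
      have e3 : (⟨3, by omega⟩ : Fin 4) = 3 := rfl
      fin_cases j <;> simp only [e2, e3] <;> simp only [Matrix.cons_val] <;> norm_num <;> ring

def S8 : Finset (Fin 4 → ℤ) :=
  {![1,0,0,0], ![0,1,0,0], ![0,0,1,0], ![-3,-7,-9,20],
   ![0,0,0,1], ![0,-1,-1,3], ![-1,-2,-3,7], ![-1,-3,-4,9]}

set_option maxHeartbeats 2000000 in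
lemma hd_of (p : Fin 4 → ℤ) (h : p 0 + p 1 + p 2 + p 3 = 1 ∧ 0 ≤ p 3 ∧
    0 ≤ 20 * p 0 + 3 * p 3 ∧ 0 ≤ 20 * p 1 + 7 * p 3 ∧ 0 ≤ 20 * p 2 + 9 * p 3) :
    (p 0 = 1 ∧ p 1 = 0 ∧ p 2 = 0 ∧ p 3 = 0) ∨ (p 0 = 0 ∧ p 1 = 1 ∧ p 2 = 0 ∧ p 3 = 0) ∨
    (p 0 = 0 ∧ p 1 = 0 ∧ p 2 = 1 ∧ p 3 = 0) ∨ (p 0 = -3 ∧ p 1 = -7 ∧ p 2 = -9 ∧ p 3 = 20) ∨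
    (p 0 = 0 ∧ p 1 = 0 ∧ p 2 = 0 ∧ p 3 = 1) ∨ (p 0 = 0 ∧ p 1 = -1 ∧ p 2 = -1 ∧ p 3 = 3) ∨
    (p 0 = -1 ∧ p 1 = -2 ∧ p 2 = -3 ∧ p 3 = 7) ∨ (p 0 = -1 ∧ p 1 = -3 ∧ p 2 = -4 ∧ p 3 = 9) := by
  obtain ⟨h1, h2, h3, h4, h5⟩ := h
  set t := p 3 with ht
  by_cases ht0 : t = 0
  · have : (p 0 = 1 ∧ p 1 = 0 ∧ p 2 = 0) ∨ (p 0 = 0 ∧ p 1 = 1 ∧ p 2 = 0) ∨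
        (p 0 = 0 ∧ p 1 = 0 ∧ p 2 = 1) := by omega
    rcases this with ⟨x,y,z⟩|⟨x,y,z⟩|⟨x,y,z⟩
    · exact Or.inl ⟨x, y, z, ht0⟩
    · exact Or.inr (Or.inl ⟨x, y, z, ht0⟩)
    · exact Or.inr (Or.inr (Or.inl ⟨x, y, z, ht0⟩))
  · have h6 : 1 ≤ t ∧ t ≤ 20 := by omega
    obtain ⟨h6a, h6b⟩ := h6
    interval_cases t
    · exact Or.inr (Or.inr (Or.inr (Or.inr ((Or.inl (by omega))))))
    · exfalso; omega
    · exact Or.inr (Or.inr (Or.inr (Or.inr (Or.inr ((Or.inl (by omega)))))))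
    · exfalso; omega
    · exfalso; omega
    · exfalso; omega
    · exact Or.inr (Or.inr (Or.inr (Or.inr (Or.inr (Or.inr ((Or.inl (by omega))))))))
    · exfalso; omega
    · exact Or.inr (Or.inr (Or.inr (Or.inr (Or.inr (Or.inr (Or.inr ((by omega))))))))
    · exfalso; omega
    · exfalso; omega
    · exfalso; omega
    · exfalso; omega
    · exfalso; omega
    · exfalso; omega
    · exfalso; omega
    · exfalso; omega
    · exfalso; omega
    · exfalso; omega
    · exact Or.inr (Or.inr (Or.inr ((Or.inl (by omega)))))

lemma self_eq (p : Fin 4 → ℤ) : p = ![p 0, p 1, p 2, p 3] := by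
  funext i; fin_cases i <;> rfl

lemma set_eq : {p : Fin 4 → ℤ | (fun i => (p i : ℝ)) ∈ convexHull ℝ (Set.range vtxR)}
    = ↑S8 := by
  ext p
  simp only [Set.mem_setOf_eq, mem_iff, S8, Finset.coe_insert, Set.mem_insert_iff,
    Finset.coe_singleton, Set.mem_singleton_iff]
  constructor
  · intro h
    rcases hd_of p h with ⟨a,b,c,d⟩|⟨a,b,c,d⟩|⟨a,b,c,d⟩|⟨a,b,c,d⟩|⟨a,b,c,d⟩|⟨a,b,c,d⟩|⟨a,b,c,d⟩|⟨a,b,c,d⟩ <;>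
      rw [self_eq p, a, b, c, d] <;> tauto
  · intro h
    rcases h with rfl|rfl|rfl|rfl|rfl|rfl|rfl|rfl <;> refine ⟨by decide, by decide, by decide, by decide, by decide⟩

lemma comb (a b c d : ℝ) :
    ∑ k, (![a, b, c, d]) k • vtxR k = ![a - 3*d, b - 7*d, c - 9*d, 20*d] := by
  funext j
  rw [Finset.sum_apply]
  simp only [Pi.smul_apply, smul_eq_mul, vtxR, vtx, Fin.sum_univ_four]
  fin_cases j <;> simp only [Matrix.cons_val] <;> norm_num <;> ring

/-- The lattice simplex `conv{e₁, e₂, e₃, (-3,-7,-9,20)} ⊂ ℝ⁴` contains exactly 8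
lattice points of `ℤ⁴`: its 4 vertices and 4 points in its relative interior
(i.e. every non-vertex lattice point is a convex combination of the vertices with
all coefficients strictly positive). -/
theorem simplex_has_eight_lattice_points :
    {p : Fin 4 → ℤ |
        (fun i => (p i : ℝ)) ∈ convexHull ℝ (Set.range vtxR)}.ncard = 8 ∧
      (∀ k, vtx k ∈ {p : Fin 4 → ℤ |
        (fun i => (p i : ℝ)) ∈ convexHull ℝ (Set.range vtxR)}) ∧
      (∀ p : Fin 4 → ℤ,
        (fun i => (p i : ℝ)) ∈ convexHull ℝ (Set.range vtxR) → p ∉ Set.range vtx →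
          ∃ w : Fin 4 → ℝ, (∀ k, 0 < w k) ∧ ∑ k, w k = 1 ∧
            (fun i => (p i : ℝ)) = ∑ k, w k • vtxR k) := by
  have e2 : (⟨2, by omega⟩ : Fin 4) = 2 := rfl
  have e3 : (⟨3, by omega⟩ : Fin 4) = 3 := rfl
  refine ⟨?_, ?_, ?_⟩
  · rw [set_eq, Set.ncard_coe_finset]; decide
  · intro k
    rw [Set.mem_setOf_eq, mem_iff]
    fin_cases k <;> refine ⟨by decide, by decide, by decide, by decide, by decide⟩
  · intro p hp hnp
    rw [mem_iff] at hp
    rcases hd_of p hp with ⟨a,b,c,d⟩|⟨a,b,c,d⟩|⟨a,b,c,d⟩|⟨a,b,c,d⟩|⟨a,b,c,d⟩|⟨a,b,c,d⟩|⟨a,b,c,d⟩|⟨a,b,c,d⟩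
    · exact absurd ⟨0, by rw [self_eq p, a, b, c, d]; rfl⟩ hnp
    · exact absurd ⟨1, by rw [self_eq p, a, b, c, d]; rfl⟩ hnp
    · exact absurd ⟨2, by rw [self_eq p, a, b, c, d]; rfl⟩ hnp
    · exact absurd ⟨3, by rw [self_eq p, a, b, c, d]; rfl⟩ hnp
    · refine ⟨![3/20, 7/20, 9/20, 1/20], fun k => by fin_cases k <;> norm_num,
        by rw [Fin.sum_univ_four]; simp only [Matrix.cons_val]; norm_num, ?_⟩
      rw [comb]
      funext i
      fin_cases i <;> simp only [e2, e3] <;> norm_num [a, b, c, d] <;> rfl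
    · refine ⟨![9/20, 1/20, 7/20, 3/20], fun k => by fin_cases k <;> norm_num,
        by rw [Fin.sum_univ_four]; simp only [Matrix.cons_val]; norm_num, ?_⟩
      rw [comb]
      funext i
      fin_cases i <;> simp only [e2, e3] <;> norm_num [a, b, c, d] <;> rfl
    · refine ⟨![1/20, 9/20, 3/20, 7/20], fun k => by fin_cases k <;> norm_num,
        by rw [Fin.sum_univ_four]; simp only [Matrix.cons_val]; norm_num, ?_⟩
      rw [comb]
      funext i
      fin_cases i <;> simp only [e2, e3] <;> norm_num [a, b, c, d] <;> rfl
    · refine ⟨![7/20, 3/20, 1/20, 9/20], fun k => by fin_cases k <;> norm_num,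
        by rw [Fin.sum_univ_four]; simp only [Matrix.cons_val]; norm_num, ?_⟩
      rw [comb]
      funext i
      fin_cases i <;> simp only [e2, e3] <;> norm_num [a, b, c, d] <;> rfl
end

section
/- Let d ≥ 1, b ≥ d+2, and let h_0, …, h_{d+1} be nonnegative integers with h_i ≤ C(b-d+i-2, i) for all 0 ≤ i ≤ d+1, satisfying the Dehn–Sommerville symmetry h_i = h_{d+1-i}. Then Σ_{j=0}^{d+1} h_j ≤ f_d(CycP_{d+1}(b)) = C(b-⌈(d+1)/2⌉, ⌊(d+1)/2⌋) + C(b-1-⌈d/2⌉, ⌊d/2⌋). -/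
/-!
Split the sum at `⌊(d+1)/2⌋`. By symmetry the upper half is a reflected copy of an initial
segment of the lower half, so both halves are bounded by initial sums of `C(n+i, i)` with
`n = b-d-2`, and the hockey-stick identity evaluates these to the two binomials of `f_d`.
-/

open Finset

lemma Nat.sum_range_add_choose' (n m : ℕ) :
    ∑ i ∈ range (m + 1), (n + i).choose i = (n + m + 1).choose m := by
  have hsymm (i : ℕ) : (n + i).choose i = (i + n).choose n := by
    rw [Nat.add_comm n i, Nat.choose_symm_add]
  simp_rw [hsymm, Nat.sum_range_add_choose]
  rw [show n + m + 1 = m + (n + 1) by ring, Nat.choose_symm_add, Nat.add_assoc]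

/-- The upper half `f (⌊N/2⌋ + 1), …, f N` of a palindrome is the reflection of
`f 0, …, f (⌈N/2⌉ - 1)`. -/
lemma sum_range_le_of_palindrome {M : Type*} [AddCommMonoid M] [PartialOrder M]
    [IsOrderedAddMonoid M] (N : ℕ) {f g : ℕ → M} (hsymm : ∀ i ≤ N, f i = f (N - i))
    (hle : ∀ i ≤ N / 2, f i ≤ g i) :
    ∑ i ∈ range (N + 1), f i ≤ ∑ i ∈ range (N / 2 + 1), g i + ∑ i ∈ range ((N + 1) / 2), g i := by
  have hupper : ∑ i ∈ range ((N + 1) / 2), f (N / 2 + 1 + i) = ∑ i ∈ range ((N + 1) / 2), f i := by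
    rw [← sum_range_reflect]
    refine sum_congr rfl fun i hi => ?_
    rw [mem_range] at hi
    rw [hsymm _ (by omega)]
    congr 1
    omega
  calc ∑ i ∈ range (N + 1), f i
      = ∑ i ∈ range (N / 2 + 1), f i + ∑ i ∈ range ((N + 1) / 2), f (N / 2 + 1 + i) := by
        rw [← sum_range_add]
        congr 2
        omega
    _ ≤ ∑ i ∈ range (N / 2 + 1), g i + ∑ i ∈ range ((N + 1) / 2), g i := by
        rw [hupper]
        gcongr with i hi i hi <;> rw [mem_range] at hi <;> exact hle i (by omega)

theorem symmetric_h_vector_sum_le_general (d b : ℕ) (hb : d + 2 ≤ b)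
    (h : ℕ → ℤ)
    (hbound : ∀ i ≤ d + 1, h i ≤ (Nat.choose (b - d + i - 2) i : ℤ))
    (hsymm : ∀ i ≤ d + 1, h i = h (d + 1 - i)) :
    ∑ j ∈ range (d + 2), h j ≤
      ((Nat.choose (b - (d + 2) / 2) ((d + 1) / 2)
        + Nat.choose (b - 1 - (d + 1) / 2) (d / 2) : ℕ) : ℤ) := by
  set n := b - d - 2
  have hcyclic : ∀ i ≤ (d + 1) / 2, h i ≤ ((n + i).choose i : ℤ) := fun i hi => by
    rw [show n + i = b - d + i - 2 by omega]
    exact hbound i (by omega)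
  have key := sum_range_le_of_palindrome (d + 1) hsymm hcyclic
  rw [show (d + 1 + 1) / 2 = d / 2 + 1 by omega] at key
  simp_rw [← Nat.cast_sum, Nat.sum_range_add_choose'] at key
  rwa [show b - (d + 2) / 2 = n + (d + 1) / 2 + 1 by omega,
    show b - 1 - (d + 1) / 2 = n + d / 2 + 1 by omega, Nat.cast_add]

/-- Any palindromic sequence of nonnegative integers bounded entrywise by the
h-vector `C(b-d+i-2, i)` of the cyclic `(d+1)`-polytope with `b` vertices has total
sum at most its facet number
`f_d(CycP_{d+1}(b)) = C(b-⌈(d+1)/2⌉, ⌊(d+1)/2⌋) + C(b-1-⌈d/2⌉, ⌊d/2⌋)`. -/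
theorem symmetric_h_vector_sum_le (d b : ℕ) (hd : 1 ≤ d) (hb : d + 2 ≤ b)
    (h : ℕ → ℤ)
    (hnonneg : ∀ i ≤ d + 1, 0 ≤ h i)
    (hbound : ∀ i ≤ d + 1, h i ≤ (Nat.choose (b - d + i - 2) i : ℤ))
    (hsymm : ∀ i ≤ d + 1, h i = h (d + 1 - i)) :
    ∑ j ∈ range (d + 2), h j ≤
      ((Nat.choose (b - (d + 2) / 2) ((d + 1) / 2)
        + Nat.choose (b - 1 - (d + 1) / 2) (d / 2) : ℕ) : ℤ) :=
  symmetric_h_vector_sum_le_general d b hb h hbound hsymm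
end
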